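/- arXiv:2201.03633 — 2 statements merged into one kernel-verified Lean document; each statement's English description precedes it below -/
import Mathlib

section
/- Let G be a simple graph and let n ∈ ℕ. Then col_ve(G) ≥ n+4 if and only if Bob has a strategy in the vertex-edge marking game on G that guarantees that, in every play in which he follows it, there is a round at which it is Bob's turn and an n-free path exists in the current position. -/
/-!
If Bob can force score `n + 3` at a vertex `v`, then just before his move that pushed it there
`v` was unmarked with at least `n + 2` marked edges, and two of them form an `n`-free path of
length two.

Conversely, Bob plays his path-forcing strategy until an `n`-free path appears and from then on
attacks a shortest one, `w 0, …, w k`. For `k ≥ 3` its edge `w 1 w 2` is unmarked (otherwise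
the tail would be shorter) and he marks it; whatever vertex Alice marks next, either the tail
or the first two edges form a shorter `n`-free path. For `k = 2` the middle vertex `w 1` already
carries the two marked path edges and `n` further marked edges among its `n + 1` others: Bob marks
one more edge at `w 1` if he can, and if he cannot, all of them were marked already. Either way
`w 1` reaches score `n + 3`.
-/

namespace VEGame

open Classical

variable {V : Type*}

/-- The set of vertices marked after Alice's first `r` moves. -/
def mVerts (a : ℕ → V) (r : ℕ) : Set V := {v | ∃ i < r, a i = v}

/-- The set of edges marked after Bob's first `r` moves. -/
def mEdges (b : ℕ → Sym2 V) (r : ℕ) : Set (Sym2 V) := {e | ∃ i < r, b i = e}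

/-- Alice's sequence of moves is legal: whenever an unmarked vertex remains, she
marks a previously unmarked vertex.  (If no unmarked vertex remains the game has
ended; the remaining values of `a` are irrelevant, as they do not change the set
of marked vertices.) -/
def AliceLegal (a : ℕ → V) : Prop :=
  ∀ r, (∃ v, v ∉ mVerts a r) → a r ∉ mVerts a r

/-- Bob's sequence of moves is legal: whenever an unmarked edge of `G` remains,
he marks a previously unmarked edge of `G`. -/
def BobLegal (G : SimpleGraph V) (b : ℕ → Sym2 V) : Prop :=
  ∀ r, (∃ e ∈ G.edgeSet, e ∉ mEdges b r) → b r ∈ G.edgeSet ∧ b r ∉ mEdges b r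

/-- The score of vertex `v` at the end of round `r` (rounds are numbered from 0):
`0` if `v` is marked, and otherwise the number of marked edges incident to `v`. -/
noncomputable def score (G : SimpleGraph V) (a : ℕ → V) (b : ℕ → Sym2 V)
    (r : ℕ) (v : V) : ℕ∞ :=
  if v ∈ mVerts a (r + 1) then 0
  else {e | e ∈ G.edgeSet ∧ v ∈ e ∧ e ∈ mEdges b (r + 1)}.encard

/-- `a` is the sequence of Alice's moves when she follows strategy `A`
(a function of the history, i.e. of Bob's moves so far). -/
def ConsistentA (A : List (Sym2 V) → V) (a : ℕ → V) (b : ℕ → Sym2 V) : Prop :=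
  ∀ r, a r = A (List.ofFn fun i : Fin r => b i)

/-- `b` is the sequence of Bob's moves when he follows strategy `B`
(a function of the history, i.e. of Alice's moves so far). -/
def ConsistentB (B : List V → Sym2 V) (a : ℕ → V) (b : ℕ → Sym2 V) : Prop :=
  ∀ r, b r = B (List.ofFn fun i : Fin (r + 1) => a i)

/-- Bob has a winning strategy for score `s`: a legal strategy which, against
every legal play of Alice, forces some round and some vertex to have score at
least `s`. -/
def BobWins (G : SimpleGraph V) (s : ℕ) : Prop :=
  ∃ B : List V → Sym2 V,
    (∀ a b, ConsistentB B a b → AliceLegal a → BobLegal G b) ∧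
    (∀ a b, ConsistentB B a b → AliceLegal a →
      ∃ r v, (s : ℕ∞) ≤ score G a b r v)

/-- The vertex-edge coloring number of `G`: one plus the supremum of all scores
for which Bob has a winning strategy. -/
noncomputable def colVE (G : SimpleGraph V) : ℕ∞ :=
  (⨆ s ∈ {s : ℕ | BobWins G s}, (s : ℕ∞)) + 1

end VEGame

open VEGame

namespace VEGame

variable {V : Type*}

/-- The edges of the path with vertex sequence `v 0, …, v k`. -/
def pathEdges (k : ℕ) (v : ℕ → V) : Set (Sym2 V) := {e | ∃ j < k, e = s(v j, v (j + 1))}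

/-- An `n`-free path in a position (`MV` = marked vertices, `ME` = marked edges) of the
vertex-edge marking game on `G`: a path with vertex sequence `v 0, …, v k`, `k ≥ 2`,
whose first and last edges are marked, whose interior vertices are unmarked, and whose
every interior vertex is incident to at least `n + 1` edges not in the path, at least
`n` of which are marked. -/
def IsNFreePath (G : SimpleGraph V) (MV : Set V) (ME : Set (Sym2 V)) (n : ℕ)
    (k : ℕ) (v : ℕ → V) : Prop :=
  2 ≤ k ∧
  (∀ i < k, G.Adj (v i) (v (i + 1))) ∧
  (∀ i ≤ k, ∀ j ≤ k, v i = v j → i = j) ∧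
  s(v 0, v 1) ∈ ME ∧ s(v (k - 1), v k) ∈ ME ∧
  (∀ i, 0 < i → i < k → v i ∉ MV) ∧
  (∀ i, 0 < i → i < k →
    ((n : ℕ∞) + 1 ≤ {e | e ∈ G.edgeSet ∧ v i ∈ e ∧ e ∉ pathEdges k v}.encard ∧
      (n : ℕ∞) ≤ {e | e ∈ G.edgeSet ∧ e ∈ ME ∧ v i ∈ e ∧ e ∉ pathEdges k v}.encard))

end VEGame

namespace VEGame

variable {V : Type*} {G : SimpleGraph V} {MV MV' : Set V} {ME ME' : Set (Sym2 V)} {n k : ℕ}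
  {w : ℕ → V}

lemma setOf_mem_ofFn {α : Type*} (f : ℕ → α) (r : ℕ) :
    {x | x ∈ List.ofFn fun i : Fin r => f i} = {x | ∃ i < r, f i = x} := by
  ext x
  simp only [Set.mem_ofPred_eq, List.mem_ofFn, Fin.exists_iff, exists_prop]

lemma reverse_ofFn_succ {α : Type*} (f : ℕ → α) (r : ℕ) :
    (List.ofFn fun i : Fin (r + 1) => f i).reverse =
      f r :: (List.ofFn fun i : Fin r => f i).reverse := by
  rw [List.ofFn_succ', List.concat_eq_append, List.reverse_concat']
  rfl

lemma mVerts_succ (a : ℕ → V) (r : ℕ) : mVerts a (r + 1) = insert (a r) (mVerts a r) := by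
  ext v
  simp only [mVerts, Set.mem_ofPred_eq, Set.mem_insert_iff, Nat.lt_succ_iff_lt_or_eq,
    or_and_right, exists_or, exists_eq_left, eq_comm (a := v), or_comm]

lemma mEdges_succ (b : ℕ → Sym2 V) (r : ℕ) : mEdges b (r + 1) = insert (b r) (mEdges b r) := by
  ext e
  simp only [mEdges, Set.mem_ofPred_eq, Set.mem_insert_iff, Nat.lt_succ_iff_lt_or_eq,
    or_and_right, exists_or, exists_eq_left, eq_comm (a := e), or_comm]

lemma mEdges_congr {b b' : ℕ → Sym2 V} {r : ℕ} (h : ∀ i < r, b i = b' i) :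
    mEdges b r = mEdges b' r := by
  ext e
  exact exists_congr fun i => and_congr_right fun hi => by rw [h i hi]

lemma pathEdges_mono {k k' : ℕ} (hk : k' ≤ k) (w : ℕ → V) : pathEdges k' w ⊆ pathEdges k w :=
  fun _ ⟨j, hj, he⟩ => ⟨j, by omega, he⟩

lemma pathEdges_tail_subset (k : ℕ) (w : ℕ → V) :
    pathEdges (k - 1) (fun i => w (i + 1)) ⊆ pathEdges k w :=
  fun _ ⟨j, hj, he⟩ => ⟨j + 1, by omega, he⟩

lemma pathEdges_two (w : ℕ → V) : pathEdges 2 w = {s(w 0, w 1), s(w 1, w 2)} := by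
  ext e
  constructor
  · rintro ⟨j, hj, rfl⟩
    interval_cases j <;> simp
  · rintro (rfl | rfl)
    exacts [⟨0, by norm_num, rfl⟩, ⟨1, by norm_num, rfl⟩]

/-- The condition `IsNFreePath` imposes on an interior vertex `x`, where `P` is the set of edges
of the path. -/
def IsFreeVertex (G : SimpleGraph V) (ME : Set (Sym2 V)) (n : ℕ) (P : Set (Sym2 V)) (x : V) :
    Prop :=
  (n : ℕ∞) + 1 ≤ {e | e ∈ G.edgeSet ∧ x ∈ e ∧ e ∉ P}.encard ∧
    (n : ℕ∞) ≤ {e | e ∈ G.edgeSet ∧ e ∈ ME ∧ x ∈ e ∧ e ∉ P}.encard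

lemma IsFreeVertex.mono {P P' : Set (Sym2 V)} {x : V} (h : IsFreeVertex G ME n P x)
    (hME : ME ⊆ ME') (hP : P' ⊆ P) : IsFreeVertex G ME' n P' x :=
  ⟨h.1.trans <| Set.encard_le_encard fun _ ⟨hG, hx, hnP⟩ => ⟨hG, hx, fun h => hnP (hP h)⟩,
    h.2.trans <| Set.encard_le_encard fun _ ⟨hG, hM, hx, hnP⟩ =>
      ⟨hG, hME hM, hx, fun h => hnP (hP h)⟩⟩

lemma IsNFreePath.isFreeVertex (h : IsNFreePath G MV ME n k w) {i : ℕ} (hi : 0 < i)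
    (hik : i < k) : IsFreeVertex G ME n (pathEdges k w) (w i) :=
  h.2.2.2.2.2.2 i hi hik

lemma IsNFreePath.tail (h : IsNFreePath G MV ME n k w) (hk : 3 ≤ k) (hME : ME ⊆ ME')
    (h12 : s(w 1, w 2) ∈ ME') (hMV : ∀ i, 1 < i → i < k → w i ∉ MV') :
    IsNFreePath G MV' ME' n (k - 1) (fun i => w (i + 1)) := by
  obtain ⟨-, hadj, hinj, -, hlast, -, -⟩ := id h
  refine ⟨by omega, fun i hi => hadj (i + 1) (by omega), fun i hi j hj hij => ?_, h12, ?_,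
    fun i hi hik => hMV (i + 1) (by omega) (by omega), fun i hi hik => ?_⟩
  · have := hinj (i + 1) (by omega) (j + 1) (by omega) hij
    omega
  · show s(w (k - 1 - 1 + 1), w (k - 1 + 1)) ∈ ME'
    rw [show k - 1 - 1 + 1 = k - 1 by omega, show k - 1 + 1 = k by omega]
    exact hME hlast
  · exact (h.isFreeVertex (by omega) (by omega)).mono hME (pathEdges_tail_subset k w)

lemma isNFreePath_two_iff :
    IsNFreePath G MV ME n 2 w ↔
      G.Adj (w 0) (w 1) ∧ G.Adj (w 1) (w 2) ∧ w 0 ≠ w 2 ∧ s(w 0, w 1) ∈ ME ∧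
        s(w 1, w 2) ∈ ME ∧ w 1 ∉ MV ∧ IsFreeVertex G ME n (pathEdges 2 w) (w 1) := by
  constructor
  · intro h
    obtain ⟨-, hadj, hinj, h01, h12, hint, -⟩ := id h
    exact ⟨hadj 0 (by omega), hadj 1 (by omega), fun h02 => absurd (hinj 0 (by omega) 2 le_rfl h02)
      (by omega), h01, h12, hint 1 one_pos one_lt_two, h.isFreeVertex one_pos one_lt_two⟩
  · rintro ⟨h01, h12, h02, hm01, hm12, hint, hfree⟩
    refine ⟨le_rfl, fun i hi => ?_, fun i hi j hj hij => ?_, hm01, hm12, fun i hi hi2 => ?_,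
      fun i hi hi2 => ?_⟩
    · interval_cases i <;> assumption
    · have := h01.ne
      have := h12.ne
      interval_cases i <;> interval_cases j <;> simp_all
    · obtain rfl : i = 1 := by omega
      exact hint
    · obtain rfl : i = 1 := by omega
      exact hfree

lemma IsNFreePath.takeTwo (h : IsNFreePath G MV ME n k w) (hME : ME ⊆ ME')
    (h12 : s(w 1, w 2) ∈ ME') (hMV : w 1 ∉ MV') : IsNFreePath G MV' ME' n 2 w := by
  obtain ⟨hk, hadj, hinj, h01, -⟩ := id h
  exact isNFreePath_two_iff.2 ⟨hadj 0 (by omega), hadj 1 (by omega),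
    fun h02 => absurd (hinj 0 (by omega) 2 hk h02) (by omega), hME h01, h12, hMV,
    (h.isFreeVertex one_pos (by omega)).mono hME (pathEdges_mono hk w)⟩

/-- The tail if `x = w 1`, otherwise the first two edges. -/
lemma IsNFreePath.exists_shorter (h : IsNFreePath G MV ME n k w) (hk : 3 ≤ k) (x : V) :
    ∃ k' < k, ∃ w', IsNFreePath G (insert x MV) (insert s(w 1, w 2) ME) n k' w' := by
  have hME : ME ⊆ insert s(w 1, w 2) ME := Set.subset_insert _ _
  have h12 : s(w 1, w 2) ∈ insert s(w 1, w 2) ME := Set.mem_insert _ _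
  obtain ⟨-, -, hinj, -, -, hint, -⟩ := id h
  by_cases hx : x = w 1
  · refine ⟨k - 1, by omega, _, h.tail hk hME h12 fun i hi hik hmem => ?_⟩
    rcases hmem with hi1 | hmem
    · have := hinj i (by omega) 1 (by omega) (hi1.trans hx)
      omega
    · exact hint i (by omega) hik hmem
  · exact ⟨2, by omega, w, h.takeTwo hME h12
      (by simpa [Ne.symm hx] using hint 1 one_pos (by omega))⟩

lemma IsNFreePath.add_three_le_encard_incident (h : IsNFreePath G MV ME n 2 w)
    {S : Set (Sym2 V)} (hS : ME ⊆ S)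
    (hother : (n : ℕ∞) + 1 ≤ ({e | e ∈ G.edgeSet ∧ w 1 ∈ e ∧ e ∈ S} \ pathEdges 2 w).encard) :
    (n : ℕ∞) + 3 ≤ {e | e ∈ G.edgeSet ∧ w 1 ∈ e ∧ e ∈ S}.encard := by
  obtain ⟨h01, h12, h02, hm01, hm12, -⟩ := isNFreePath_two_iff.1 h
  have hne : s(w 0, w 1) ≠ s(w 1, w 2) := by
    simp [h01.ne, h02]
  have hsub : pathEdges 2 w ⊆ {e | e ∈ G.edgeSet ∧ w 1 ∈ e ∧ e ∈ S} := by
    rw [pathEdges_two]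
    rintro e (rfl | rfl)
    exacts [⟨h01, Sym2.mem_mk_right _ _, hS hm01⟩, ⟨h12, Sym2.mem_mk_left _ _, hS hm12⟩]
  rw [← Set.encard_sdiff_add_encard_of_subset hsub, pathEdges_two, Set.encard_pair hne,
    ← pathEdges_two]
  calc (n : ℕ∞) + 3 = n + 1 + 2 := by ring
    _ ≤ _ := by gcongr

lemma le_encard_sdiff_pair {α : Type*} {s : Set α} {m : ℕ∞} (x y : α) (h : m + 2 ≤ s.encard) :
    m ≤ (s \ {x, y}).encard := by
  have hpair : ({x, y} : Set α).encard ≤ 2 :=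
    (Set.encard_insert_le _ _).trans (by rw [Set.encard_singleton]; rfl)
  rw [← ENat.add_le_add_iff_right (k := 2) (by decide)]
  calc m + 2 ≤ s.encard := h
    _ ≤ (s \ {x, y}).encard + ({x, y} : Set α).encard := Set.encard_le_encard_sdiff_add_encard _ _
    _ ≤ (s \ {x, y}).encard + 2 := by gcongr

lemma score_eq_of_notMem {a : ℕ → V} {b : ℕ → Sym2 V} {r : ℕ} {v : V}
    (hv : v ∉ mVerts a (r + 1)) :
    score G a b r v = {e | e ∈ G.edgeSet ∧ v ∈ e ∧ e ∈ mEdges b (r + 1)}.encard :=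
  if_neg hv

lemma exists_nFreePath_of_score_ge {a : ℕ → V} {b : ℕ → Sym2 V} {r : ℕ} {v : V}
    (h : (n : ℕ∞) + 3 ≤ score G a b r v) :
    ∃ k w, IsNFreePath G (mVerts a (r + 1)) (mEdges b r) n k w := by
  have hv : v ∉ mVerts a (r + 1) := fun hv => by simp [score, hv] at h
  rw [score_eq_of_notMem hv] at h
  set T := {e | e ∈ G.edgeSet ∧ v ∈ e ∧ e ∈ mEdges b r}
  have hT : (n : ℕ∞) + 2 ≤ T.encard := by
    have hsub : {e | e ∈ G.edgeSet ∧ v ∈ e ∧ e ∈ mEdges b (r + 1)} ⊆ insert (b r) T := by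
      rintro e ⟨hG, hve, he⟩
      rw [mEdges_succ] at he
      exact he.imp_right fun he => ⟨hG, hve, he⟩
    rw [← ENat.add_le_add_iff_right (k := 1) (by decide), add_assoc]
    exact h.trans ((Set.encard_le_encard hsub).trans (Set.encard_insert_le _ _))
  obtain ⟨e₁, e₂, ⟨hG₁, hv₁, hm₁⟩, ⟨hG₂, hv₂, hm₂⟩, hne⟩ :=
    Set.one_lt_encard_iff.1 <| (by decide : (1 : ℕ∞) < 2).trans_le (le_add_self.trans hT)
  obtain ⟨u, rfl⟩ := Sym2.mem_iff_exists.1 hv₁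
  obtain ⟨x, rfl⟩ := Sym2.mem_iff_exists.1 hv₂
  refine ⟨2, fun i => if i = 0 then u else if i = 1 then v else x, isNFreePath_two_iff.2
    ⟨(G.mem_edgeSet.1 hG₁).symm, G.mem_edgeSet.1 hG₂,
      fun hux => hne (congrArg (fun y => s(v, y)) hux),
      by simpa [Sym2.eq_swap] using hm₁, hm₂, hv, ?_, ?_⟩⟩
  all_goals simp only [pathEdges_two, if_pos, if_neg, one_ne_zero, OfNat.ofNat_ne_zero,
    OfNat.ofNat_ne_one, not_false_eq_true, Sym2.eq_swap (a := u)]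
  · exact (le_encard_sdiff_pair _ _ ((le_of_eq (by ring)).trans h)).trans
      (Set.encard_le_encard fun e ⟨⟨hG, hve, _⟩, hP⟩ => ⟨hG, hve, hP⟩)
  · exact (le_encard_sdiff_pair _ _ hT).trans
      (Set.encard_le_encard fun e ⟨⟨hG, hve, hm⟩, hP⟩ => ⟨hG, hm, hve, hP⟩)

lemma exists_score_ge_of_nFreePath_two {a : ℕ → V} {b : ℕ → Sym2 V} {r : ℕ} {w : ℕ → V}
    (hw : IsNFreePath G (mVerts a (r + 1)) (mEdges b r) n 2 w)
    (hbr : (∃ e ∈ G.edgeSet, w 1 ∈ e ∧ e ∉ mEdges b r) →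
      w 1 ∈ b r ∧ b r ∈ G.edgeSet ∧ b r ∉ mEdges b r) :
    ∃ r' v, (n : ℕ∞) + 3 ≤ score G a b r' v := by
  obtain ⟨-, -, -, h01, h12, hv, hfree⟩ := isNFreePath_two_iff.1 hw
  by_cases he : ∃ e ∈ G.edgeSet, w 1 ∈ e ∧ e ∉ mEdges b r
  · obtain ⟨hvb, hG, hnew⟩ := hbr he
    have hP : pathEdges 2 w ⊆ mEdges b r := by
      rw [pathEdges_two]
      rintro e (rfl | rfl) <;> assumption
    have hS : mEdges b r ⊆ mEdges b (r + 1) := mEdges_succ b r ▸ Set.subset_insert _ _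
    refine ⟨r, w 1, ?_⟩
    rw [score_eq_of_notMem hv]
    refine hw.add_three_le_encard_incident hS ?_
    calc (n : ℕ∞) + 1
        ≤ {e | e ∈ G.edgeSet ∧ e ∈ mEdges b r ∧ w 1 ∈ e ∧ e ∉ pathEdges 2 w}.encard + 1 := by
          gcongr; exact hfree.2
      _ = (insert (b r) {e | e ∈ G.edgeSet ∧ e ∈ mEdges b r ∧ w 1 ∈ e ∧
            e ∉ pathEdges 2 w}).encard := (Set.encard_insert_of_notMem fun h => hnew h.2.1).symm
      _ ≤ _ := by
          rw [mEdges_succ]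
          refine Set.encard_le_encard ?_
          rintro e (rfl | ⟨hG', hm, hve, hnP⟩)
          exacts [⟨⟨hG, hvb, Or.inl rfl⟩, fun h => hnew (hP h)⟩, ⟨⟨hG', hve, Or.inr hm⟩, hnP⟩]
  · push Not at he
    obtain ⟨i, hi, -⟩ := h01
    obtain ⟨r, rfl⟩ : ∃ r', r = r' + 1 := ⟨r - 1, by omega⟩
    refine ⟨r, w 1, ?_⟩
    rw [score_eq_of_notMem fun h => hv (mVerts_succ a (r + 1) ▸ Set.mem_insert_of_mem _ h)]
    exact hw.add_three_le_encard_incident subset_rfl <| hfree.1.trans <|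
      Set.encard_le_encard fun e ⟨hG, hve, hnP⟩ => ⟨⟨hG, hve, he e hG hve⟩, hnP⟩

/-- Bob's moves under `ofRule rule`, latest first, computed from Alice's moves, latest first. -/
def replayRev (rule : List V → Set (Sym2 V) → Sym2 V) : List V → List (Sym2 V)
  | [] => []
  | x :: t => rule (x :: t).reverse {e | e ∈ replayRev rule t} :: replayRev rule t

/-- The strategy in which Bob answers the history `h` of Alice's moves by `rule h ME`, where `ME`
is the set of edges he has marked so far; he recomputes `ME` from `h`. -/
def ofRule (rule : List V → Set (Sym2 V) → Sym2 V) (h : List V) : Sym2 V :=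
  rule h {e | e ∈ replayRev rule h.reverse.tail}

section ofRule

variable {rule : List V → Set (Sym2 V) → Sym2 V} {a : ℕ → V} {b : ℕ → Sym2 V}

lemma ConsistentB.replayRev_eq (hc : ConsistentB (ofRule rule) a b) (r : ℕ) :
    replayRev rule (List.ofFn fun i : Fin r => a i).reverse =
      (List.ofFn fun i : Fin r => b i).reverse := by
  induction r with
  | zero => rfl
  | succ r ih =>
    have hb : b r = rule (List.ofFn fun i : Fin (r + 1) => a i)
        {e | e ∈ replayRev rule (List.ofFn fun i : Fin r => a i).reverse} := by
      rw [hc r, ofRule, reverse_ofFn_succ, List.tail_cons]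
    rw [reverse_ofFn_succ a, replayRev, ← reverse_ofFn_succ a r, List.reverse_reverse, ← hb, ih,
      reverse_ofFn_succ b]

lemma ConsistentB.ofRule_eq (hc : ConsistentB (ofRule rule) a b) (r : ℕ) :
    b r = rule (List.ofFn fun i : Fin (r + 1) => a i) (mEdges b r) := by
  rw [hc r, ofRule, reverse_ofFn_succ, List.tail_cons, hc.replayRev_eq]
  congr 1
  simp only [List.mem_reverse]
  exact setOf_mem_ofFn b r

end ofRule

section Strategy

open scoped Classical

def HasNFreePath (G : SimpleGraph V) (MV : Set V) (ME : Set (Sym2 V)) (n : ℕ) : Prop :=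
  ∃ k w, IsNFreePath G MV ME n k w

noncomputable def shortestLength (hp : HasNFreePath G MV ME n) : ℕ := Nat.find hp

noncomputable def shortest (hp : HasNFreePath G MV ME n) : ℕ → V := (Nat.find_spec hp).choose

lemma isNFreePath_shortest (hp : HasNFreePath G MV ME n) :
    IsNFreePath G MV ME n (shortestLength hp) (shortest hp) :=
  (Nat.find_spec hp).choose_spec

lemma shortestLength_le (hp : HasNFreePath G MV ME n) (hw : IsNFreePath G MV ME n k w) :
    shortestLength hp ≤ k :=
  Nat.find_min' hp ⟨w, hw⟩

lemma shortest_edge_notMem (hp : HasNFreePath G MV ME n) (h3 : 3 ≤ shortestLength hp) :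
    s(shortest hp 1, shortest hp 2) ∉ ME := fun hm => by
  have hs := isNFreePath_shortest hp
  have := shortestLength_le hp <| hs.tail h3 subset_rfl hm fun i _ hik =>
    hs.2.2.2.2.2.1 i (by omega) hik
  omega

noncomputable def legalize (G : SimpleGraph V) (ME : Set (Sym2 V)) (e : Sym2 V) : Sym2 V :=
  if e ∈ G.edgeSet ∧ e ∉ ME then e else if h : ∃ f ∈ G.edgeSet, f ∉ ME then h.choose else e

lemma legalize_legal {e : Sym2 V} (h : ∃ f ∈ G.edgeSet, f ∉ ME) :
    legalize G ME e ∈ G.edgeSet ∧ legalize G ME e ∉ ME := by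
  unfold legalize
  split_ifs with he
  exacts [he, h.choose_spec]

lemma legalize_eq_self {e : Sym2 V} (h : (∃ f ∈ G.edgeSet, f ∉ ME) → e ∈ G.edgeSet ∧ e ∉ ME) :
    legalize G ME e = e := by
  unfold legalize
  split_ifs with he hex
  exacts [rfl, absurd (h hex) he, rfl]

noncomputable def attack (G : SimpleGraph V) (MV : Set V) (ME : Set (Sym2 V)) (n : ℕ)
    (fallback : Sym2 V) : Sym2 V :=
  if hp : HasNFreePath G MV ME n then
    if 3 ≤ shortestLength hp then s(shortest hp 1, shortest hp 2)
    else if he : ∃ e ∈ G.edgeSet, shortest hp 1 ∈ e ∧ e ∉ ME then he.choose else fallback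
  else fallback

lemma attack_of_not_hasNFreePath {fb : Sym2 V} (hp : ¬HasNFreePath G MV ME n) :
    attack G MV ME n fb = fb :=
  dif_neg hp

lemma legalize_attack_of_three_le {fb : Sym2 V} (hp : HasNFreePath G MV ME n)
    (h3 : 3 ≤ shortestLength hp) :
    legalize G ME (attack G MV ME n fb) = s(shortest hp 1, shortest hp 2) := by
  rw [attack, dif_pos hp, if_pos h3]
  exact legalize_eq_self fun _ =>
    ⟨(isNFreePath_shortest hp).2.1 1 (by omega), shortest_edge_notMem hp h3⟩

lemma legalize_attack_of_two {fb : Sym2 V} (hp : HasNFreePath G MV ME n)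
    (h3 : ¬3 ≤ shortestLength hp) (he : ∃ e ∈ G.edgeSet, shortest hp 1 ∈ e ∧ e ∉ ME) :
    shortest hp 1 ∈ legalize G ME (attack G MV ME n fb) ∧
      legalize G ME (attack G MV ME n fb) ∈ G.edgeSet ∧
      legalize G ME (attack G MV ME n fb) ∉ ME := by
  obtain ⟨hG, hv, hn⟩ := he.choose_spec
  rw [attack, dif_pos hp, if_neg h3, dif_pos he, legalize_eq_self fun _ => ⟨hG, hn⟩]
  exact ⟨hv, hG, hn⟩

noncomputable def bobRule (G : SimpleGraph V) (n : ℕ) (B : List V → Sym2 V) (h : List V)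
    (ME : Set (Sym2 V)) : Sym2 V :=
  legalize G ME (attack G {v | v ∈ h} ME n (B h))

variable {a : ℕ → V} {b fb : ℕ → Sym2 V}

lemma ConsistentB.bobRule_eq {B : List V → Sym2 V} (hc : ConsistentB (ofRule (bobRule G n B)) a b)
    (r : ℕ) :
    b r = legalize G (mEdges b r)
      (attack G (mVerts a (r + 1)) (mEdges b r) n (B (List.ofFn fun i : Fin (r + 1) => a i))) := by
  rw [hc.ofRule_eq r, bobRule, setOf_mem_ofFn]
  rfl

lemma exists_score_ge_of_attack
    (hb : ∀ r, b r = legalize G (mEdges b r) (attack G (mVerts a (r + 1)) (mEdges b r) n (fb r)))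
    {r : ℕ} (hw : IsNFreePath G (mVerts a (r + 1)) (mEdges b r) n k w) :
    ∃ r' v, (n : ℕ∞) + 3 ≤ score G a b r' v := by
  induction k using Nat.strong_induction_on generalizing r w with
  | _ k ih =>
  have hp : HasNFreePath G (mVerts a (r + 1)) (mEdges b r) n := ⟨k, w, hw⟩
  have hk := shortestLength_le hp hw
  have hs := isNFreePath_shortest hp
  by_cases h3 : 3 ≤ shortestLength hp
  · obtain ⟨k', hk', w', hw'⟩ := hs.exists_shorter h3 (a (r + 1))
    rw [← mVerts_succ, ← (hb r).trans (legalize_attack_of_three_le hp h3), ← mEdges_succ] at hw'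
    exact ih k' (by omega) hw'
  · rw [show shortestLength hp = 2 by have := hs.1; omega] at hs
    exact exists_score_ge_of_nFreePath_two hs fun he => by
      rw [hb r]; exact legalize_attack_of_two hp h3 he

lemma eq_of_forall_not_hasNFreePath
    (hb : ∀ r, b r = legalize G (mEdges b r) (attack G (mVerts a (r + 1)) (mEdges b r) n (fb r)))
    (hleg : BobLegal G fb) (hno : ∀ r, ¬HasNFreePath G (mVerts a (r + 1)) (mEdges b r) n) :
    b = fb := by
  funext r
  induction r using Nat.strong_induction_on with
  | _ r ih =>
  rw [hb r, attack_of_not_hasNFreePath (hno r), mEdges_congr ih]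
  exact legalize_eq_self (hleg r)

theorem bobWins_of_forces_nFreePath {B : List V → Sym2 V}
    (hlegal : ∀ a b, ConsistentB B a b → AliceLegal a → BobLegal G b)
    (hforce : ∀ a b, ConsistentB B a b → AliceLegal a →
      ∃ r k w, IsNFreePath G (mVerts a (r + 1)) (mEdges b r) n k w) :
    BobWins G (n + 3) := by
  refine ⟨ofRule (bobRule G n B), fun a b hc _ r hex => ?_, fun a b hc ha => ?_⟩
  · rw [hc.bobRule_eq r]
    exact legalize_legal hex
  · have hfb : ConsistentB B a fun r => B (List.ofFn fun i : Fin (r + 1) => a i) := fun _ => rfl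
    obtain ⟨r, k, w, hw⟩ : ∃ r, HasNFreePath G (mVerts a (r + 1)) (mEdges b r) n := by
      by_contra! hno
      obtain ⟨r, hr⟩ := hforce a _ hfb ha
      rw [← eq_of_forall_not_hasNFreePath hc.bobRule_eq (hlegal a _ hfb ha) hno] at hr
      exact hno r hr
    obtain ⟨r', v, hv⟩ := exists_score_ge_of_attack hc.bobRule_eq hw
    exact ⟨r', v, by exact_mod_cast hv⟩

lemma BobWins.mono {s t : ℕ} (h : BobWins G s) (hts : t ≤ s) : BobWins G t :=
  let ⟨B, hlegal, hwin⟩ := h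
  ⟨B, hlegal, fun a b hc ha =>
    let ⟨r, v, hv⟩ := hwin a b hc ha
    ⟨r, v, (Nat.cast_le.2 hts).trans hv⟩⟩

lemma le_colVE_iff_bobWins : (n : ℕ∞) + 4 ≤ colVE G ↔ BobWins G (n + 3) := by
  rw [colVE, show (n : ℕ∞) + 4 = ((n + 2 : ℕ) : ℕ∞) + 1 + 1 by push_cast; ring,
    ENat.add_le_add_iff_right (by decide), ENat.add_one_le_iff (by simp), lt_biSup_iff]
  constructor
  · rintro ⟨s, hs, hlt⟩
    exact BobWins.mono hs (Nat.cast_lt.1 hlt)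
  · exact fun h => ⟨n + 3, h, Nat.cast_lt.2 (by omega)⟩

end Strategy

end VEGame

/-- `col_ve(G) ≥ n + 4` if and only if Bob has a (legal) strategy guaranteeing that, in
every play in which he follows it, there is a round at which it is Bob's turn and an
`n`-free path exists in the current position.  (In round `r`, when it is Bob's turn, the
marked vertices are `mVerts a (r+1)`—Alice has just moved—and the marked edges are
`mEdges b r`.) -/
theorem colVE_ge_iff_bob_forces_nFreePath {V : Type*} (G : SimpleGraph V) (n : ℕ) :
    (n : ℕ∞) + 4 ≤ colVE G ↔
      ∃ B : List V → Sym2 V,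
        (∀ a b, ConsistentB B a b → AliceLegal a → BobLegal G b) ∧
        (∀ a b, ConsistentB B a b → AliceLegal a →
          ∃ r k w, IsNFreePath G (mVerts a (r + 1)) (mEdges b r) n k w) := by
  rw [le_colVE_iff_bobWins]
  refine ⟨fun ⟨B, hlegal, hwin⟩ => ⟨B, hlegal, fun a b hc ha => ?_⟩,
    fun ⟨B, hlegal, hforce⟩ => bobWins_of_forces_nFreePath hlegal hforce⟩
  obtain ⟨r, v, hv⟩ := hwin a b hc ha
  exact ⟨r, exists_nFreePath_of_score_ge (by exact_mod_cast hv)⟩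
end

section
/- If H is a subgraph of a simple graph G, then col_ve(H) ≤ col_ve(G). -/
open VEGame

/-! Bob wins on `G` by simulating the game on `H`.  A vertex Alice marks in `G` is read as a move
in `H`: the vertex itself if it is an unmarked vertex of `H`, otherwise any unmarked vertex of `H`.
Bob answers with his strategy for `H` and marks the image edge in `G` as long as `H` has unmarked
edges left, and an arbitrary unmarked edge of `G` afterwards.  A vertex of `H` unmarked in the
simulation is then unmarked in `G`, and every edge marked in the simulation is marked in `G`, so
each score reached in `H` is reached in `G` as well. -/

namespace VEGame

variable {V W : Type*}

theorem mem_mVerts_iff_mem_ofFn (a : ℕ → V) (r : ℕ) (v : V) :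
    v ∈ mVerts a r ↔ v ∈ List.ofFn fun i : Fin r => a i := by
  simp [mVerts, List.mem_ofFn, Fin.exists_iff]

theorem mem_mEdges_iff_mem_ofFn (b : ℕ → Sym2 V) (r : ℕ) (e : Sym2 V) :
    e ∈ mEdges b r ↔ e ∈ List.ofFn fun i : Fin r => b i :=
  mem_mVerts_iff_mem_ofFn b r e

theorem mem_mVerts_succ (a : ℕ → V) (r : ℕ) (v : V) :
    v ∈ mVerts a (r + 1) ↔ v ∈ mVerts a r ∨ a r = v := by
  simp only [mVerts, Set.mem_ofPred_eq, Nat.lt_succ_iff_lt_or_eq, or_and_right, exists_or,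
    exists_eq_left]

theorem mVerts_mono (a : ℕ → V) : Monotone (mVerts a) :=
  fun _ _ hrs _ ⟨i, hi, hv⟩ => ⟨i, lt_of_lt_of_le hi hrs, hv⟩

theorem mem_mEdges_succ (b : ℕ → Sym2 V) (r : ℕ) (e : Sym2 V) :
    e ∈ mEdges b (r + 1) ↔ e ∈ mEdges b r ∨ b r = e :=
  mem_mVerts_succ b r e

theorem mEdges_mono (b : ℕ → Sym2 V) : Monotone (mEdges b) :=
  mVerts_mono b

theorem ofFn_succ_eq_append (a : ℕ → V) (r : ℕ) :
    (List.ofFn fun i : Fin (r + 1) => a i) = (List.ofFn fun i : Fin r => a i) ++ [a r] := by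
  rw [List.ofFn_succ_last]; rfl

section Simulation

variable {G : SimpleGraph V} {H : SimpleGraph W} (f : H →g G) [Nonempty W]
  (B : List W → Sym2 W)

open Classical in
noncomputable def pullMove (played : List W) (x : V) : W :=
  if h : ∃ w, f w = x ∧ w ∉ played then h.choose
  else if h' : ∃ w, w ∉ played then h'.choose
  else Classical.arbitrary W

theorem pullMove_not_mem {played : List W} (h : ∃ w, w ∉ played) (x : V) :
    pullMove f played x ∉ played := by
  unfold pullMove
  split_ifs with hx
  · exact hx.choose_spec.2
  · exact h.choose_spec

theorem pullMove_map (hf : Function.Injective f) {played : List W} {w : W} (hw : w ∉ played) :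
    pullMove f played (f w) = w := by
  have h : ∃ w', f w' = f w ∧ w' ∉ played := ⟨w, rfl, hw⟩
  rw [pullMove, dif_pos h]
  exact hf h.choose_spec.1

structure SimState (V W : Type*) where
  alice : List W
  bobH : List (Sym2 W)
  bobG : List (Sym2 V)

open Classical in
noncomputable def liftReply (s : SimState V W) (reply : Sym2 W) : Sym2 V :=
  if ∃ e ∈ H.edgeSet, e ∉ s.bobH then reply.map f
  else if h : ∃ e ∈ G.edgeSet, e ∉ s.bobG then h.choose
  else reply.map f

noncomputable def simStep (s : SimState V W) (x : V) : SimState V W :=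
  let w := pullMove f s.alice x
  let reply := B (s.alice ++ [w])
  ⟨s.alice ++ [w], s.bobH ++ [reply], s.bobG ++ [liftReply f s reply]⟩

noncomputable def simRun (l : List V) : SimState V W :=
  l.foldl (simStep f B) ⟨[], [], []⟩

/-- The default of `getLastD` is never used: Bob is asked to move only after Alice has. -/
noncomputable def liftStrategy (l : List V) : Sym2 V :=
  (simRun f B l).bobG.getLastD ((B []).map f)

variable (a : ℕ → V) {b : ℕ → Sym2 V}

noncomputable def simState (r : ℕ) : SimState V W :=
  simRun f B (List.ofFn fun i : Fin r => a i)

noncomputable def simAlice (r : ℕ) : W :=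
  pullMove f (simState f B a r).alice (a r)

noncomputable def simBob (r : ℕ) : Sym2 W :=
  B ((simState f B a r).alice ++ [simAlice f B a r])

theorem simState_succ (r : ℕ) :
    simState f B a (r + 1) = simStep f B (simState f B a r) (a r) := by
  rw [simState, ofFn_succ_eq_append, simRun, List.foldl_concat]; rfl

theorem simState_alice (r : ℕ) :
    (simState f B a r).alice = List.ofFn fun i : Fin r => simAlice f B a i := by
  induction r with
  | zero => rfl
  | succ r ih => rw [simState_succ, ofFn_succ_eq_append, ← ih]; rfl

theorem simState_bobH (r : ℕ) :
    (simState f B a r).bobH = List.ofFn fun i : Fin r => simBob f B a i := by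
  induction r with
  | zero => rfl
  | succ r ih => rw [simState_succ, ofFn_succ_eq_append, ← ih]; rfl

theorem move_eq_liftReply (hb : ConsistentB (liftStrategy f B) a b) (r : ℕ) :
    b r = liftReply f (simState f B a r) (simBob f B a r) := by
  rw [hb r, liftStrategy, ← simState, simState_succ]
  exact List.getLastD_concat

theorem simState_bobG (hb : ConsistentB (liftStrategy f B) a b) (r : ℕ) :
    (simState f B a r).bobG = List.ofFn fun i : Fin r => b i := by
  induction r with
  | zero => rfl
  | succ r ih =>
    rw [simState_succ, ofFn_succ_eq_append, ← ih, move_eq_liftReply f B a hb]; rfl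

theorem mem_simState_bobH (r : ℕ) (e : Sym2 W) :
    e ∈ (simState f B a r).bobH ↔ e ∈ mEdges (simBob f B a) r := by
  rw [simState_bobH, mem_mEdges_iff_mem_ofFn]

theorem mem_simState_bobG (hb : ConsistentB (liftStrategy f B) a b) (r : ℕ) (e : Sym2 V) :
    e ∈ (simState f B a r).bobG ↔ e ∈ mEdges b r := by
  rw [simState_bobG f B a hb, mem_mEdges_iff_mem_ofFn]

theorem eq_map_simBob (hb : ConsistentB (liftStrategy f B) a b) {r : ℕ}
    (hH : ∃ e ∈ H.edgeSet, e ∉ mEdges (simBob f B a) r) : b r = (simBob f B a r).map f := by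
  simp only [← mem_simState_bobH] at hH
  rw [move_eq_liftReply f B a hb, liftReply, if_pos hH]

theorem fresh_edge_of_exhausted (hb : ConsistentB (liftStrategy f B) a b) {r : ℕ}
    (hH : ¬ ∃ e ∈ H.edgeSet, e ∉ mEdges (simBob f B a) r)
    (hG : ∃ e ∈ G.edgeSet, e ∉ mEdges b r) : b r ∈ G.edgeSet ∧ b r ∉ mEdges b r := by
  simp only [← mem_simState_bobH, ← mem_simState_bobG f B a hb] at hH hG ⊢
  rw [move_eq_liftReply f B a hb, liftReply, if_neg hH, dif_pos hG]
  exact hG.choose_spec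

theorem consistentB_simulation : ConsistentB B (simAlice f B a) (simBob f B a) := by
  intro r
  rw [simBob, simState_alice, ofFn_succ_eq_append]

theorem aliceLegal_simAlice : AliceLegal (simAlice f B a) := by
  rintro r ⟨w, hw⟩
  simp only [mem_mVerts_iff_mem_ofFn, ← simState_alice] at hw ⊢
  exact pullMove_not_mem f ⟨w, hw⟩ (a r)

theorem mem_mVerts_simAlice_of_map (hf : Function.Injective f) {v : W} (r : ℕ)
    (h : f v ∈ mVerts a r) : v ∈ mVerts (simAlice f B a) r := by
  induction r with
  | zero => exact absurd h (by simp [mVerts])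
  | succ r ih =>
    rw [mem_mVerts_succ] at h ⊢
    rcases h with h | h
    · exact .inl (ih h)
    by_cases hv : v ∈ mVerts (simAlice f B a) r
    · exact .inl hv
    rw [mem_mVerts_iff_mem_ofFn, ← simState_alice] at hv
    exact .inr (by rw [simAlice, h, pullMove_map f hf hv])

theorem map_mem_mEdges_of_mem_simBob (hb : ConsistentB (liftStrategy f B) a b) {e : Sym2 W}
    (he : e ∈ H.edgeSet) (r : ℕ) (h : e ∈ mEdges (simBob f B a) r) : e.map f ∈ mEdges b r := by
  induction r with
  | zero => exact absurd h (by simp [mEdges])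
  | succ r ih =>
    rw [mem_mEdges_succ] at h ⊢
    rcases h with h | rfl
    · exact .inl (ih h)
    by_cases hr : simBob f B a r ∈ mEdges (simBob f B a) r
    · exact .inl (ih hr)
    · exact .inr (eq_map_simBob f B a hb ⟨_, he, hr⟩)

theorem score_simulation_le (hf : Function.Injective f) (hb : ConsistentB (liftStrategy f B) a b)
    (r : ℕ) (v : W) : score H (simAlice f B a) (simBob f B a) r v ≤ score G a b r (f v) := by
  by_cases hv : v ∈ mVerts (simAlice f B a) (r + 1)
  · simp [score, hv]
  have hfv : f v ∉ mVerts a (r + 1) := fun h => hv (mem_mVerts_simAlice_of_map f B a hf _ h)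
  rw [score, score, if_neg hv, if_neg hfv]
  refine Set.encard_le_encard_of_injOn ?_ (Sym2.map.injective hf).injOn
  rintro e ⟨he, hve, hmem⟩
  exact ⟨f.map_mem_edgeSet he, Sym2.mem_map.2 ⟨v, hve, rfl⟩,
    map_mem_mEdges_of_mem_simBob f B a hb he _ hmem⟩

theorem bobLegal_of_simulation (hf : Function.Injective f)
    (hb : ConsistentB (liftStrategy f B) a b) (hB : BobLegal H (simBob f B a)) : BobLegal G b := by
  intro r hG
  by_cases hH : ∃ e ∈ H.edgeSet, e ∉ mEdges (simBob f B a) r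
  · obtain ⟨hedge, hfresh⟩ := hB r hH
    rw [eq_map_simBob f B a hb hH]
    refine ⟨f.map_mem_edgeSet hedge, ?_⟩
    rintro ⟨i, hi, hbi⟩
    have hHi : ∃ e ∈ H.edgeSet, e ∉ mEdges (simBob f B a) i :=
      let ⟨e, he, hne⟩ := hH
      ⟨e, he, fun h => hne (mEdges_mono _ hi.le h)⟩
    rw [eq_map_simBob f B a hb hHi] at hbi
    exact hfresh ⟨i, hi, Sym2.map.injective hf hbi⟩
  · exact fresh_edge_of_exhausted f B a hb hH hG

end Simulation

theorem BobWins.of_injective_hom {G : SimpleGraph V} {H : SimpleGraph W} {f : H →g G}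
    (hf : Function.Injective f) {s : ℕ} (h : BobWins H s) : BobWins G s := by
  obtain ⟨B, hB_legal, hB_wins⟩ := h
  have : Nonempty W := ⟨(B []).out.1⟩
  refine ⟨liftStrategy f B, fun a b hb _ => ?_, fun a b hb _ => ?_⟩
  · exact bobLegal_of_simulation f B a hf hb
      (hB_legal _ _ (consistentB_simulation f B a) (aliceLegal_simAlice f B a))
  · obtain ⟨r, v, hs⟩ := hB_wins _ _ (consistentB_simulation f B a) (aliceLegal_simAlice f B a)
    exact ⟨r, f v, hs.trans (score_simulation_le f B a hf hb r v)⟩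

theorem colVE_le_of_injective_hom {G : SimpleGraph V} {H : SimpleGraph W} {f : H →g G}
    (hf : Function.Injective f) : colVE H ≤ colVE G :=
  add_le_add_left (biSup_mono fun _ => BobWins.of_injective_hom hf) 1

end VEGame

/-- If `H` is a subgraph of `G` (its vertex set is a subset of that of `G` and its edges
form a subset of the edges of `G`), then `col_ve(H) ≤ col_ve(G)`. -/
theorem colVE_subgraph_le {V : Type*} (G : SimpleGraph V) (H : G.Subgraph) :
    colVE H.coe ≤ colVE G :=
  colVE_le_of_injective_hom H.hom_injective
end
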